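/- Let θ₁ and θ₂ be real numbers with θ₁ ≠ θ₂, let γ > 0, and let θ̂₁, θ̂₂ be independent real-valued random variables with θ̂₁ ~ N(θ₁, γ²) and θ̂₂ ~ N(θ₂, γ²). Let W : ℝ × ℝ → ℝ be a measurable function such that for almost every realization (x, y) of (θ̂₁, θ̂₂), the value W(x, y) is a local minimum of the function w ↦ (1/2)σ((w−x)²) + (1/2)σ((w−y)²). Then the expected GM-Appeal of W satisfies E[(1/2)(𝟙{(W(θ̂₁,θ̂₂)−θ₁)² < (θ̂₁−θ₁)²} + 𝟙{(W(θ̂₁,θ̂₂)−θ₂)² < (θ̂₂−θ₂)²})] ≥ (1/16)·exp(−1/γ²). -/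

import Mathlib

/-!
A local minimiser `w` of `maxflLoss x y` with `x < y` lies in `(x, y)`, where the derivative
changes sign, and within `1.04` of `x` or of `y`, because the loss is strictly concave on
`[x + 1.03, y - 1.03]` and a strictly concave function has no interior local minimum. So on the
event `θ̂₁ < θ₁ - 0.52`, `θ₂ + 0.52 < θ̂₂` (mirrored when `θ₂ < θ₁`) the model is closer to `θ₁`
than `θ̂₁` is, or closer to `θ₂` than `θ̂₂` is, and the GM-Appeal is at least `1/2`. By
independence this event has probability at least `m²`, where `m = exp (-1 / (2γ²)) / (2√2)` bounds
the Gaussian tail beyond `θ - 0.52`: for `γ ≤ 1/2` by the mass of the window of width `γ` beyond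
it, for `γ > 1/2` by one half minus the mass of the strip `[θ - 0.52, θ)`.
-/

open MeasureTheory ProbabilityTheory

noncomputable def sigmoid (x : ℝ) : ℝ := 1 / (1 + Real.exp (-x))

open Set Topology
open Real hiding sigmoid
open scoped NNReal

lemma sigmoid_eq_real_sigmoid : sigmoid = Real.sigmoid := funext fun _ => one_div _

lemma hasDerivAt_sigmoid' (t : ℝ) : HasDerivAt sigmoid (sigmoid t * (1 - sigmoid t)) t :=
  sigmoid_eq_real_sigmoid ▸ Real.hasDerivAt_sigmoid t

lemma sigmoid_mul_one_sub_pos (t : ℝ) : 0 < sigmoid t * (1 - sigmoid t) := by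
  rw [sigmoid_eq_real_sigmoid]
  exact mul_pos (Real.sigmoid_pos t) (sub_pos.2 (Real.sigmoid_lt_one t))

noncomputable def maxflLoss (x y : ℝ) (w : ℝ) : ℝ :=
  (1 / 2) * sigmoid ((w - x) ^ 2) + (1 / 2) * sigmoid ((w - y) ^ 2)

lemma maxflLoss_comm (x y : ℝ) : maxflLoss x y = maxflLoss y x :=
  funext fun _ => add_comm _ _

noncomputable def sigmoidSqSlope (u : ℝ) : ℝ := u * (sigmoid (u ^ 2) * (1 - sigmoid (u ^ 2)))

lemma hasDerivAt_half_sigmoid_sq (u : ℝ) :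
    HasDerivAt (fun u => (1 / 2) * sigmoid (u ^ 2)) (sigmoidSqSlope u) u := by
  refine (((hasDerivAt_sigmoid' (u ^ 2)).comp u (hasDerivAt_pow 2 u)).const_mul
    (1 / 2 : ℝ)).congr_deriv ?_
  simp only [sigmoidSqSlope]
  ring

lemma hasDerivAt_maxflLoss (x y w : ℝ) :
    HasDerivAt (maxflLoss x y) (sigmoidSqSlope (w - x) + sigmoidSqSlope (w - y)) w :=
  ((hasDerivAt_half_sigmoid_sq _).comp_sub_const w x).add
    ((hasDerivAt_half_sigmoid_sq _).comp_sub_const w y)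

lemma sigmoidSqSlope_neg (u : ℝ) : sigmoidSqSlope (-u) = -sigmoidSqSlope u := by
  simp [sigmoidSqSlope]

lemma sigmoidSqSlope_pos_iff {u : ℝ} : 0 < sigmoidSqSlope u ↔ 0 < u :=
  mul_pos_iff_of_pos_right (sigmoid_mul_one_sub_pos _)

lemma sigmoidSqSlope_neg_iff {u : ℝ} : sigmoidSqSlope u < 0 ↔ u < 0 := by
  rw [← neg_pos, ← sigmoidSqSlope_neg, sigmoidSqSlope_pos_iff, neg_pos]

lemma hasDerivAt_sigmoidSqSlope (u : ℝ) :
    HasDerivAt sigmoidSqSlope (sigmoid (u ^ 2) * (1 - sigmoid (u ^ 2)) *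
      (1 + 2 * u ^ 2 * (1 - 2 * sigmoid (u ^ 2)))) u := by
  have hs := (hasDerivAt_sigmoid' (u ^ 2)).comp u (hasDerivAt_pow 2 u)
  refine ((hasDerivAt_id u).fun_mul (hs.fun_mul (hs.const_sub 1))).congr_deriv ?_
  simp only [Function.comp_apply, id]
  ring

lemma sigmoid_ge_d2 {t : ℝ} (ht : 1.06 ≤ t) : 0.74 ≤ sigmoid t := by
  have hexp : 2.85 ≤ exp t := calc
    (2.85 : ℝ) ≤ 2.7182818283 * (0.06 + 1) := by norm_num
    _ ≤ exp 1 * exp 0.06 := by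
      gcongr
      exacts [exp_one_gt_d9.le, add_one_le_exp _]
    _ = exp 1.06 := by rw [← exp_add]; norm_num
    _ ≤ exp t := exp_le_exp.2 ht
  rw [sigmoid, exp_neg, le_div_iff₀ (by positivity)]
  have := inv_anti₀ (by norm_num) hexp
  linarith

lemma sigmoidSqSlope_strictAntiOn : StrictAntiOn sigmoidSqSlope (Ici 1.03) := by
  refine strictAntiOn_of_hasDerivWithinAt_neg (convex_Ici _)
    (fun u _ => (hasDerivAt_sigmoidSqSlope u).continuousAt.continuousWithinAt)
    (fun u _ => (hasDerivAt_sigmoidSqSlope u).hasDerivWithinAt) fun u hu => ?_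
  rw [interior_Ici, mem_Ioi] at hu
  have hσ := sigmoid_ge_d2 (t := u ^ 2) (by nlinarith)
  exact mul_neg_of_pos_of_neg (sigmoid_mul_one_sub_pos _) (by nlinarith)

lemma StrictConcaveOn.not_isLocalMin {f : ℝ → ℝ} {s : Set ℝ} {a : ℝ}
    (hf : StrictConcaveOn ℝ s f) (hs : s ∈ 𝓝 a) : ¬IsLocalMin f a := by
  intro hmin
  obtain ⟨ε, hε, hball⟩ := Metric.eventually_nhds_iff.1 (hmin.and hs)
  have hmem : ∀ z, |z| < ε → f a ≤ f (a + z) ∧ a + z ∈ s := fun z hz =>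
    hball (by simpa [Real.dist_eq] using hz)
  obtain ⟨hf₁, hs₁⟩ := hmem (ε / 2) (by rw [abs_of_pos (by positivity)]; linarith)
  obtain ⟨hf₂, hs₂⟩ := hmem (-(ε / 2))
    (by rw [abs_neg, abs_of_pos (by positivity)]; linarith)
  have := hf.2 hs₁ hs₂ (by linarith) (by norm_num : (0 : ℝ) < 1 / 2)
    (by norm_num : (0 : ℝ) < 1 / 2) (by norm_num)
  simp only [smul_eq_mul] at this
  rw [show 1 / 2 * (a + ε / 2) + 1 / 2 * (a + -(ε / 2)) = a by ring] at this
  linarith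

lemma maxflLoss_strictConcaveOn (x y : ℝ) :
    StrictConcaveOn ℝ (Icc (x + 1.03) (y - 1.03)) (maxflLoss x y) := by
  refine StrictAntiOn.strictConcaveOn_of_deriv (convex_Icc _ _)
    (fun w _ => (hasDerivAt_maxflLoss x y w).continuousAt.continuousWithinAt) ?_
  rw [interior_Icc]
  intro z₁ hz₁ z₂ hz₂ hlt
  rw [(hasDerivAt_maxflLoss x y z₁).deriv, (hasDerivAt_maxflLoss x y z₂).deriv,
    ← neg_sub y z₁, ← neg_sub y z₂, sigmoidSqSlope_neg, sigmoidSqSlope_neg]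
  have h₁ : sigmoidSqSlope (z₂ - x) < sigmoidSqSlope (z₁ - x) :=
    sigmoidSqSlope_strictAntiOn (by simp; linarith [hz₁.1]) (by simp; linarith [hz₂.1])
      (by linarith)
  have h₂ : sigmoidSqSlope (y - z₁) < sigmoidSqSlope (y - z₂) :=
    sigmoidSqSlope_strictAntiOn (by simp; linarith [hz₂.2]) (by simp; linarith [hz₁.2])
      (by linarith)
  linarith

lemma lt_add_or_sub_lt_of_isLocalMin_maxflLoss {x y w : ℝ} (h : IsLocalMin (maxflLoss x y) w) :
    w < x + 1.04 ∨ y - 1.04 < w := by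
  by_contra! hw
  refine (maxflLoss_strictConcaveOn x y).not_isLocalMin (Icc_mem_nhds ?_ ?_) h <;> linarith

lemma mem_Ioo_of_isLocalMin_maxflLoss {x y w : ℝ} (hxy : x < y)
    (h : IsLocalMin (maxflLoss x y) w) : w ∈ Ioo x y := by
  have hcrit := h.hasDerivAt_eq_zero (hasDerivAt_maxflLoss x y w)
  by_contra! hw
  rw [mem_Ioo, not_and_or, not_lt, not_lt] at hw
  rcases hw with hwx | hyw
  · have h₁ : ¬0 < sigmoidSqSlope (w - x) := by rw [sigmoidSqSlope_pos_iff]; linarith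
    have h₂ : sigmoidSqSlope (w - y) < 0 := sigmoidSqSlope_neg_iff.2 (by linarith)
    linarith
  · have h₁ : 0 < sigmoidSqSlope (w - x) := sigmoidSqSlope_pos_iff.2 (by linarith)
    have h₂ : ¬sigmoidSqSlope (w - y) < 0 := by rw [sigmoidSqSlope_neg_iff]; linarith
    linarith

lemma appeal_of_isLocalMin_maxflLoss {θ₁ θ₂ x y w : ℝ} (hx : x < θ₁ - 0.52)
    (hy : θ₂ + 0.52 < y) (hxy : x < y) (h : IsLocalMin (maxflLoss x y) w) :
    (w - θ₁) ^ 2 < (x - θ₁) ^ 2 ∨ (w - θ₂) ^ 2 < (y - θ₂) ^ 2 := by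
  obtain ⟨hxw, hwy⟩ := mem_Ioo_of_isLocalMin_maxflLoss hxy h
  rcases lt_add_or_sub_lt_of_isLocalMin_maxflLoss h with hw | hw
  · left; nlinarith
  · right; nlinarith

section Gaussian

variable {σ c : ℝ}

lemma gaussianPDFReal_sq_toNNReal (hσ : 0 < σ) (θ x : ℝ) :
    gaussianPDFReal θ (σ ^ 2).toNNReal x
      = (σ * √(2 * π))⁻¹ * exp (-(x - θ) ^ 2 / (2 * σ ^ 2)) := by
  rw [gaussianPDFReal, Real.coe_toNNReal _ (sq_nonneg σ), mul_comm (2 * π),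
    Real.sqrt_mul (sq_nonneg σ), Real.sqrt_sq hσ.le]

lemma sq_toNNReal_ne_zero (hσ : 0 < σ) : (σ ^ 2).toNNReal ≠ 0 := by
  simpa using hσ.ne'

lemma measureReal_gaussianReal_eq_setIntegral (θ : ℝ) {v : ℝ≥0} (hv : v ≠ 0)
    (s : Set ℝ) : (gaussianReal θ v).real s = ∫ x in s, gaussianPDFReal θ v x := by
  rw [measureReal_def, gaussianReal_apply_eq_integral _ hv,
    ENNReal.toReal_ofReal (setIntegral_nonneg_of_ae (ae_of_all _ (gaussianPDFReal_nonneg _ _)))]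

lemma gaussianReal_Ioi_add_eq_Iio_sub (θ c : ℝ) (v : ℝ≥0) :
    gaussianReal θ v (Ioi (θ + c)) = gaussianReal θ v (Iio (θ - c)) := by
  have hrefl := gaussianReal_map_const_sub (μ := θ) (v := v) (2 * θ)
  rw [show 2 * θ - θ = θ by ring] at hrefl
  rw [← hrefl, Measure.map_apply (by fun_prop) measurableSet_Iio]
  congr 1
  ext x
  simp only [mem_preimage, mem_Ioi, mem_Iio]
  constructor <;> intro h <;> linarith

lemma measureReal_gaussianReal_Iio_self (θ : ℝ) {v : ℝ≥0} (hv : v ≠ 0) :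
    (gaussianReal θ v).real (Iio θ) = 1 / 2 := by
  have := nullSingletonClass_gaussianReal (μ := θ) hv
  have hsymm : (gaussianReal θ v).real (Ici θ) = (gaussianReal θ v).real (Iio θ) := by
    rw [← measureReal_congr Ioi_ae_eq_Ici, measureReal_def, measureReal_def]
    simpa using congrArg ENNReal.toReal (gaussianReal_Ioi_add_eq_Iio_sub θ 0 v)
  have hcompl := probReal_compl_eq_one_sub (μ := gaussianReal θ v) (measurableSet_Iio (a := θ))
  rw [compl_Iio, hsymm] at hcompl
  linarith

lemma exp_div_sqrt_le_measureReal_gaussianReal_Iio (hσ : 0 < σ) (hc : 0 ≤ c) (θ : ℝ) :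
    exp (-(c + σ) ^ 2 / (2 * σ ^ 2)) / √(2 * π)
      ≤ (gaussianReal θ (σ ^ 2).toNNReal).real (Iio (θ - c)) := by
  have hpdf : ∀ x ∈ Ioo (θ - c - σ) (θ - c),
      (σ * √(2 * π))⁻¹ * exp (-(c + σ) ^ 2 / (2 * σ ^ 2))
        ≤ gaussianPDFReal θ (σ ^ 2).toNNReal x := by
    intro x hx
    rw [gaussianPDFReal_sq_toNNReal hσ]
    have : (x - θ) ^ 2 ≤ (c + σ) ^ 2 := by nlinarith [hx.1, hx.2]
    gcongr
  calc exp (-(c + σ) ^ 2 / (2 * σ ^ 2)) / √(2 * π)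
      = (σ * √(2 * π))⁻¹ * exp (-(c + σ) ^ 2 / (2 * σ ^ 2))
          * volume.real (Ioo (θ - c - σ) (θ - c)) := by
        rw [Real.volume_real_Ioo_of_le (by linarith)]
        field_simp
        ring
    _ ≤ ∫ x in Ioo (θ - c - σ) (θ - c), gaussianPDFReal θ (σ ^ 2).toNNReal x :=
        setIntegral_ge_of_const_le_real measurableSet_Ioo measure_Ioo_lt_top.ne hpdf
          (integrable_gaussianPDFReal _ _).integrableOn
    _ = (gaussianReal θ (σ ^ 2).toNNReal).real (Ioo (θ - c - σ) (θ - c)) :=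
        (measureReal_gaussianReal_eq_setIntegral θ (sq_toNNReal_ne_zero hσ) _).symm
    _ ≤ (gaussianReal θ (σ ^ 2).toNNReal).real (Iio (θ - c)) :=
        measureReal_mono Ioo_subset_Iio_self

lemma half_sub_le_measureReal_gaussianReal_Iio (hσ : 0 < σ) (hc : 0 ≤ c) (θ : ℝ) :
    1 / 2 - c / (σ * √(2 * π)) ≤ (gaussianReal θ (σ ^ 2).toNNReal).real (Iio (θ - c)) := by
  have hv := sq_toNNReal_ne_zero hσ
  have hsplit : (gaussianReal θ (σ ^ 2).toNNReal).real (Iio (θ - c))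
      + (gaussianReal θ (σ ^ 2).toNNReal).real (Ico (θ - c) θ) = 1 / 2 := by
    rw [← measureReal_union ((Iio_disjoint_Ici le_rfl).mono_right Ico_subset_Ici_self)
      measurableSet_Ico, Iio_union_Ico_eq_Iio (by linarith), measureReal_gaussianReal_Iio_self θ hv]
  have hstrip :
      (gaussianReal θ (σ ^ 2).toNNReal).real (Ico (θ - c) θ) ≤ c / (σ * √(2 * π)) := by
    rw [measureReal_gaussianReal_eq_setIntegral θ hv]
    calc ∫ x in Ico (θ - c) θ, gaussianPDFReal θ (σ ^ 2).toNNReal x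
        ≤ ∫ _ in Ico (θ - c) θ, (σ * √(2 * π))⁻¹ := by
          refine setIntegral_mono_on (integrable_gaussianPDFReal _ _).integrableOn
            (integrableOn_const measure_Ico_lt_top.ne) measurableSet_Ico fun x _ => ?_
          rw [gaussianPDFReal_sq_toNNReal hσ]
          refine mul_le_of_le_one_right (by positivity) (exp_le_one_iff.2 ?_)
          exact div_nonpos_of_nonpos_of_nonneg (neg_nonpos.2 (sq_nonneg _)) (by positivity)
      _ = c / (σ * √(2 * π)) := by
          rw [setIntegral_const, Real.volume_real_Ico_of_le (by linarith), smul_eq_mul]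
          ring
  linarith

end Gaussian

section TailBound

variable {γ : ℝ}

noncomputable def tailBound (γ : ℝ) : ℝ :=
  max (exp (-(0.52 + γ) ^ 2 / (2 * γ ^ 2)) / √(2 * π)) (1 / 2 - 0.52 / (γ * √(2 * π)))

lemma tailBound_le_measureReal_gaussianReal_Iio (hγ : 0 < γ) (θ : ℝ) :
    tailBound γ ≤ (gaussianReal θ (γ ^ 2).toNNReal).real (Iio (θ - 0.52)) :=
  max_le (exp_div_sqrt_le_measureReal_gaussianReal_Iio hγ (by norm_num) θ)
    (half_sub_le_measureReal_gaussianReal_Iio hγ (by norm_num) θ)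

lemma tailBound_le_measureReal_gaussianReal_Ioi (hγ : 0 < γ) (θ : ℝ) :
    tailBound γ ≤ (gaussianReal θ (γ ^ 2).toNNReal).real (Ioi (θ + 0.52)) := by
  rw [measureReal_def, gaussianReal_Ioi_add_eq_Iio_sub, ← measureReal_def]
  exact tailBound_le_measureReal_gaussianReal_Iio hγ θ

lemma sqrt_exp_div_eight_le_exp_div_sqrt (hγ : 0 < γ) (hγ' : γ ≤ 1 / 2) :
    √(exp (-1 / γ ^ 2) / 8) ≤ exp (-(0.52 + γ) ^ 2 / (2 * γ ^ 2)) / √(2 * π) := by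
  rw [sqrt_le_left (by positivity)]
  have hexponent : -1 / γ ^ 2 + -0.1616 ≤ -(0.52 + γ) ^ 2 / γ ^ 2 := by
    rw [div_add' _ _ _ (by positivity), div_le_div_iff_of_pos_right (by positivity)]
    nlinarith
  have hfactor : 0.8384 ≤ exp (-0.1616) := by
    linarith [add_one_le_exp (-0.1616)]
  calc exp (-1 / γ ^ 2) / 8 ≤ exp (-1 / γ ^ 2) * exp (-0.1616) / (2 * π) := by
        rw [div_le_div_iff₀ (by norm_num) (by positivity)]
        have := exp_pos (-1 / γ ^ 2)
        nlinarith [pi_lt_d2, mul_le_mul_of_nonneg_left hfactor this.le]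
    _ ≤ exp (-(0.52 + γ) ^ 2 / γ ^ 2) / (2 * π) := by
        rw [← exp_add]
        gcongr
    _ = (exp (-(0.52 + γ) ^ 2 / (2 * γ ^ 2)) / √(2 * π)) ^ 2 := by
        rw [div_pow, sq_sqrt (by positivity), ← exp_nat_mul]
        congr 2
        field_simp
        ring

lemma sqrt_exp_div_eight_le_half_sub (hγ : 1 / 2 < γ) :
    √(exp (-1 / γ ^ 2) / 8) ≤ 1 / 2 - 0.52 / (γ * √(2 * π)) := by
  have hγ₀ : 0 < γ := by linarith
  have hexp : exp (-1 / γ ^ 2) ≤ 6 * γ ^ 6 / (6 * γ ^ 6 + 6 * γ ^ 4 + 3 * γ ^ 2 + 1) := by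
    have htaylor := Real.sum_le_exp_of_nonneg (by positivity : 0 ≤ (γ ^ 2)⁻¹) 4
    norm_num [Finset.sum_range_succ, Nat.factorial] at htaylor
    rw [neg_div, exp_neg, one_div, ← inv_div]
    refine inv_anti₀ (by positivity) (le_trans (le_of_eq ?_) htaylor)
    field_simp
    ring
  have hsqrt : 2.5 ≤ √(2 * π) := Real.le_sqrt_of_sq_le (by nlinarith [pi_gt_d2])
  have hbase : (γ / 2 - 0.208) / γ ≤ 1 / 2 - 0.52 / (γ * √(2 * π)) := by
    have : 0.52 / (γ * √(2 * π)) ≤ 0.52 / (γ * 2.5) := by gcongr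
    have : (γ / 2 - 0.208) / γ = 1 / 2 - 0.52 / (γ * 2.5) := by field_simp; ring
    linarith
  have hpoly :
      6 * γ ^ 8 ≤ 8 * (γ / 2 - 0.208) ^ 2 * (6 * γ ^ 6 + 6 * γ ^ 4 + 3 * γ ^ 2 + 1) := by
    nlinarith [sq_nonneg (γ - 1 / 2), sq_nonneg γ, sq_nonneg (γ ^ 2 - 1 / 2),
      sq_nonneg (γ ^ 3 - γ), pow_pos hγ₀ 6, sq_nonneg (γ ^ 4 - γ ^ 2)]
  refine le_trans ((sqrt_le_left (div_nonneg (by linarith) hγ₀.le)).2 ?_) hbase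
  calc exp (-1 / γ ^ 2) / 8 ≤ 6 * γ ^ 6 / (6 * γ ^ 6 + 6 * γ ^ 4 + 3 * γ ^ 2 + 1) / 8 := by
        gcongr
    _ ≤ ((γ / 2 - 0.208) / γ) ^ 2 := by
        rw [div_pow, div_div, div_le_div_iff₀ (by positivity) (by positivity)]
        nlinarith

lemma sqrt_exp_div_eight_le_tailBound (hγ : 0 < γ) :
    √(exp (-1 / γ ^ 2) / 8) ≤ tailBound γ := by
  rcases le_or_gt γ (1 / 2) with h | h
  · exact le_max_of_le_left (sqrt_exp_div_eight_le_exp_div_sqrt hγ h)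
  · exact le_max_of_le_right (sqrt_exp_div_eight_le_half_sub h)

lemma exists_appeal_events (θ₁ θ₂ : ℝ) (hγ : 0 < γ) :
    ∃ A B : Set ℝ, MeasurableSet A ∧ MeasurableSet B ∧
      tailBound γ ≤ (gaussianReal θ₁ (γ ^ 2).toNNReal).real A ∧
      tailBound γ ≤ (gaussianReal θ₂ (γ ^ 2).toNNReal).real B ∧
      ∀ x ∈ A, ∀ y ∈ B, ∀ w, IsLocalMin (maxflLoss x y) w →
        (w - θ₁) ^ 2 < (x - θ₁) ^ 2 ∨ (w - θ₂) ^ 2 < (y - θ₂) ^ 2 := by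
  rcases le_total θ₁ θ₂ with h | h
  · refine ⟨Iio (θ₁ - 0.52), Ioi (θ₂ + 0.52), measurableSet_Iio, measurableSet_Ioi,
      tailBound_le_measureReal_gaussianReal_Iio hγ θ₁,
      tailBound_le_measureReal_gaussianReal_Ioi hγ θ₂, fun x hx y hy w hw => ?_⟩
    exact appeal_of_isLocalMin_maxflLoss hx hy (by linarith [mem_Iio.1 hx, mem_Ioi.1 hy]) hw
  · refine ⟨Ioi (θ₁ + 0.52), Iio (θ₂ - 0.52), measurableSet_Ioi, measurableSet_Iio,
      tailBound_le_measureReal_gaussianReal_Ioi hγ θ₁,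
      tailBound_le_measureReal_gaussianReal_Iio hγ θ₂, fun x hx y hy w hw => ?_⟩
    rw [maxflLoss_comm] at hw
    exact (appeal_of_isLocalMin_maxflLoss hy hx
      (by linarith [mem_Ioi.1 hx, mem_Iio.1 hy]) hw).symm

end TailBound

section Probability

variable {Ω : Type*} [MeasurableSpace Ω] {μ : Measure Ω}

lemma ProbabilityTheory.IndepFun.measureReal_inter_preimage_eq_mul_map {β β' : Type*}
    [MeasurableSpace β] [MeasurableSpace β'] {X : Ω → β} {Y : Ω → β'} (h : IndepFun X Y μ)
    (hX : Measurable X) (hY : Measurable Y) {A : Set β} {B : Set β'} (hA : MeasurableSet A)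
    (hB : MeasurableSet B) :
    μ.real (X ⁻¹' A ∩ Y ⁻¹' B) = (μ.map X).real A * (μ.map Y).real B := by
  simp only [measureReal_def, h.measure_inter_preimage_eq_mul _ _ hA hB,
    Measure.map_apply hX hA, Measure.map_apply hY hB, ENNReal.toReal_mul]

lemma mul_measureReal_le_integral_of_ae_le [IsFiniteMeasure μ] {f : Ω → ℝ} {s : Set Ω} {c : ℝ}
    (hs : MeasurableSet s) (hf : Integrable f μ) (hf₀ : 0 ≤ᵐ[μ] f)
    (hcf : ∀ᵐ ω ∂μ, ω ∈ s → c ≤ f ω) : c * μ.real s ≤ ∫ ω, f ω ∂μ := by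
  rw [mul_comm, ← smul_eq_mul, ← integral_indicator_const c hs]
  refine integral_mono_ae ((integrable_const c).indicator hs) hf ?_
  filter_upwards [hf₀, hcf] with ω h₀ hc
  by_cases hω : ω ∈ s
  · simpa [hω] using hc hω
  · simpa [hω] using h₀

lemma half_mul_measureReal_le_integral_half_mul_ite [IsFiniteMeasure μ] {p q : Ω → Prop}
    [DecidablePred p] [DecidablePred q] (hp : MeasurableSet {ω | p ω})
    (hq : MeasurableSet {ω | q ω}) {s : Set Ω} (hs : MeasurableSet s)
    (hpq : ∀ᵐ ω ∂μ, ω ∈ s → p ω ∨ q ω) :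
    1 / 2 * μ.real s
      ≤ ∫ ω, (1 / 2 : ℝ) * ((if p ω then 1 else 0) + (if q ω then 1 else 0)) ∂μ := by
  set f : Ω → ℝ := fun ω => 1 / 2 * ((if p ω then 1 else 0) + (if q ω then 1 else 0))
  have hf₀ : ∀ ω, 0 ≤ f ω := fun ω => by simp only [f]; split_ifs <;> norm_num
  have hf₁ : ∀ ω, f ω ≤ 1 := fun ω => by simp only [f]; split_ifs <;> norm_num
  have hmeas : Measurable f :=
    ((measurable_const.ite hp measurable_const).add
      (measurable_const.ite hq measurable_const)).const_mul _
  refine mul_measureReal_le_integral_of_ae_le hs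
    (Integrable.of_bound hmeas.aestronglyMeasurable 1
      (ae_of_all _ fun ω => (Real.norm_of_nonneg (hf₀ ω)).trans_le (hf₁ ω)))
    (ae_of_all _ hf₀) ?_
  filter_upwards [hpq] with ω h hω
  rcases h hω with h | h <;> simp only [h, if_true] <;> split_ifs <;> norm_num

end Probability

theorem maxfl_gm_appeal_lower_bound_general
    {Ω : Type*} [MeasurableSpace Ω] (μ : Measure Ω) [IsProbabilityMeasure μ]
    (θ₁ θ₂ γ : ℝ) (hγ : 0 < γ)
    (X Y : Ω → ℝ) (hXm : Measurable X) (hYm : Measurable Y)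
    (hX : Measure.map X μ = gaussianReal θ₁ ((γ ^ 2).toNNReal))
    (hY : Measure.map Y μ = gaussianReal θ₂ ((γ ^ 2).toNNReal))
    (hindep : IndepFun X Y μ)
    (W : ℝ × ℝ → ℝ) (hWm : Measurable W)
    (hWmin : ∀ᵐ ω ∂μ, IsLocalMin
      (fun w : ℝ => (1 / 2) * sigmoid ((w - X ω) ^ 2) + (1 / 2) * sigmoid ((w - Y ω) ^ 2))
      (W (X ω, Y ω))) :
    ∫ ω, (1 / 2 : ℝ) *
        ((if (W (X ω, Y ω) - θ₁) ^ 2 < (X ω - θ₁) ^ 2 then (1 : ℝ) else 0)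
          + (if (W (X ω, Y ω) - θ₂) ^ 2 < (Y ω - θ₂) ^ 2 then (1 : ℝ) else 0)) ∂μ
      ≥ (1 / 16) * Real.exp (-1 / γ ^ 2) := by
  obtain ⟨A, B, hA, hB, hPA, hPB, happeal⟩ := exists_appeal_events θ₁ θ₂ hγ
  have hm := sqrt_exp_div_eight_le_tailBound hγ
  rw [ge_iff_le]
  calc 1 / 16 * exp (-1 / γ ^ 2) = 1 / 2 * (√(exp (-1 / γ ^ 2) / 8) * √(exp (-1 / γ ^ 2) / 8)) := by
        rw [mul_self_sqrt (by positivity)]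
        ring
    _ ≤ 1 / 2 * ((gaussianReal θ₁ (γ ^ 2).toNNReal).real A
          * (gaussianReal θ₂ (γ ^ 2).toNNReal).real B) := by
        gcongr
        exacts [hm.trans hPA, hm.trans hPB]
    _ = 1 / 2 * μ.real (X ⁻¹' A ∩ Y ⁻¹' B) := by
        rw [hindep.measureReal_inter_preimage_eq_mul_map hXm hYm hA hB, hX, hY]
    _ ≤ _ := half_mul_measureReal_le_integral_half_mul_ite
        (measurableSet_lt (by fun_prop) (by fun_prop))
        (measurableSet_lt (by fun_prop) (by fun_prop)) ((hXm hA).inter (hYm hB))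
        (hWmin.mono fun ω hω hE => happeal _ hE.1 _ hE.2 _ hω)

theorem maxfl_gm_appeal_lower_bound
    {Ω : Type*} [MeasurableSpace Ω] (μ : Measure Ω) [IsProbabilityMeasure μ]
    (θ₁ θ₂ γ : ℝ) (hne : θ₁ ≠ θ₂) (hγ : 0 < γ)
    (X Y : Ω → ℝ) (hXm : Measurable X) (hYm : Measurable Y)
    (hX : Measure.map X μ = gaussianReal θ₁ ((γ ^ 2).toNNReal))
    (hY : Measure.map Y μ = gaussianReal θ₂ ((γ ^ 2).toNNReal))
    (hindep : IndepFun X Y μ)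
    (W : ℝ × ℝ → ℝ) (hWm : Measurable W)
    (hWmin : ∀ᵐ ω ∂μ, IsLocalMin
      (fun w : ℝ => (1 / 2) * sigmoid ((w - X ω) ^ 2) + (1 / 2) * sigmoid ((w - Y ω) ^ 2))
      (W (X ω, Y ω))) :
    ∫ ω, (1 / 2 : ℝ) *
        ((if (W (X ω, Y ω) - θ₁) ^ 2 < (X ω - θ₁) ^ 2 then (1 : ℝ) else 0)
          + (if (W (X ω, Y ω) - θ₂) ^ 2 < (Y ω - θ₂) ^ 2 then (1 : ℝ) else 0)) ∂μ
      ≥ (1 / 16) * Real.exp (-1 / γ ^ 2) :=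
  maxfl_gm_appeal_lower_bound_general μ θ₁ θ₂ γ hγ X Y hXm hYm hX hY hindep W hWm hWmin
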